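/- arXiv:1403.2073 — 5 statements merged into one kernel-verified Lean document; each statement's English description precedes it below -/
import Mathlib

section
/- Let L ≥ 1 and let D_1, D_0 be real diagonal L×L matrices with diagonal entries d1_0,…,d1_{L−1} and d0_0,…,d0_{L−1} respectively, where every d0_l > 0. Let l* be an index at which the ratio d1_l/d0_l attains its maximum. Then for every nonzero g ∈ ℝ^L, (gᵀ D_1 g)/(gᵀ D_0 g) ≤ d1_{l*}/d0_{l*}. Moreover, if the ratios d1_l/d0_l are pairwise distinct, equality holds if and only if g is a nonzero scalar multiple of the standard basis vector e_{l*}. -/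
/-! Each term satisfies `d1 l * g l ^ 2 ≤ r * (d0 l * g l ^ 2)` with `r = d1 lstar / d0 lstar`,
so summing bounds the quotient by `r`. Equality forces every term to be tight, i.e. `g` to vanish
off the indices whose ratio equals `r`, which is `lstar` alone when the ratios are distinct. -/

open Matrix

section DiagonalQuadraticForm

variable {ι : Type*} [Fintype ι]

theorem dotProduct_diagonal_mulVec_self {R : Type*} [CommSemiring R] [DecidableEq ι]
    (d g : ι → R) : g ⬝ᵥ (diagonal d *ᵥ g) = ∑ i, d i * g i ^ 2 := by
  simp only [dotProduct, mulVec_diagonal]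
  exact Finset.sum_congr rfl fun i _ => by ring

theorem sum_mul_sq_pos {d g : ι → ℝ} (hd : ∀ i, 0 < d i) (hg : g ≠ 0) :
    0 < ∑ i, d i * g i ^ 2 := by
  obtain ⟨j, hj⟩ := Function.ne_iff.mp hg
  exact Finset.sum_pos' (fun i _ => mul_nonneg (hd i).le (sq_nonneg _))
    ⟨j, Finset.mem_univ j, mul_pos (hd j) (pow_pos (abs_pos.mpr hj) 2 |>.trans_eq (sq_abs _))⟩

theorem sum_mul_sq_le_mul_sum {d₁ d₀ : ι → ℝ} {r : ℝ} (h : ∀ i, d₁ i ≤ r * d₀ i) (g : ι → ℝ) :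
    ∑ i, d₁ i * g i ^ 2 ≤ r * ∑ i, d₀ i * g i ^ 2 := by
  rw [Finset.mul_sum]
  exact Finset.sum_le_sum fun i _ => by nlinarith [h i, sq_nonneg (g i)]

theorem eq_mul_of_sum_mul_sq_eq {d₁ d₀ : ι → ℝ} {r : ℝ} (h : ∀ i, d₁ i ≤ r * d₀ i)
    {g : ι → ℝ} (heq : ∑ i, d₁ i * g i ^ 2 = r * ∑ i, d₀ i * g i ^ 2) {i : ι} (hi : g i ≠ 0) :
    d₁ i = r * d₀ i := by
  have hgap : ∑ j, (r * d₀ j - d₁ j) * g j ^ 2 = 0 := by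
    simp only [sub_mul, Finset.sum_sub_distrib, mul_assoc, ← Finset.mul_sum, heq, sub_self]
  have hterm := (Finset.sum_eq_zero_iff_of_nonneg fun j _ =>
    mul_nonneg (sub_nonneg.mpr (h j)) (sq_nonneg (g j))).mp hgap i (Finset.mem_univ i)
  linarith [(mul_eq_zero.mp hterm).resolve_right (pow_ne_zero 2 hi)]

theorem sum_mul_sq_smul_single [DecidableEq ι] (d : ι → ℝ) (j : ι) (c : ℝ) :
    ∑ i, d i * (c • Pi.single j 1 : ι → ℝ) i ^ 2 = d j * c ^ 2 := by
  rw [Finset.sum_eq_single j (fun i _ hi => by simp [Pi.single_eq_of_ne hi])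
    (fun h => absurd (Finset.mem_univ j) h)]
  simp

end DiagonalQuadraticForm

theorem eq_smul_single_of_forall_ne {ι R : Type*} [Semiring R] [DecidableEq ι] {g : ι → R}
    {j : ι}
    (h : ∀ i, i ≠ j → g i = 0) : g = g j • Pi.single j 1 := by
  funext i
  by_cases hi : i = j
  · subst hi; simp
  · simp [h i hi, Pi.single_eq_of_ne hi]

theorem stmt_1_general (L : ℕ) (d1 d0 : Fin L → ℝ) (hd0 : ∀ l, 0 < d0 l)
    (lstar : Fin L) (hmax : ∀ l, d1 l / d0 l ≤ d1 lstar / d0 lstar) :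
    (∀ g : Fin L → ℝ, g ≠ 0 →
      (g ⬝ᵥ (Matrix.diagonal d1 *ᵥ g)) / (g ⬝ᵥ (Matrix.diagonal d0 *ᵥ g)) ≤
        d1 lstar / d0 lstar) ∧
    ((∀ i j : Fin L, i ≠ j → d1 i / d0 i ≠ d1 j / d0 j) →
      ∀ g : Fin L → ℝ, g ≠ 0 →
        ((g ⬝ᵥ (Matrix.diagonal d1 *ᵥ g)) / (g ⬝ᵥ (Matrix.diagonal d0 *ᵥ g)) =
            d1 lstar / d0 lstar ↔
          ∃ c : ℝ, c ≠ 0 ∧ g = c • (Pi.single lstar 1 : Fin L → ℝ))) := by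
  simp only [dotProduct_diagonal_mulVec_self]
  have hle : ∀ l, d1 l ≤ d1 lstar / d0 lstar * d0 l := fun l => (div_le_iff₀ (hd0 l)).mp (hmax l)
  refine ⟨fun g hg => (div_le_iff₀ (sum_mul_sq_pos hd0 hg)).mpr (sum_mul_sq_le_mul_sum hle g),
    fun hdist g hg => ⟨fun heq => ?_, ?_⟩⟩
  · have hsum := (div_eq_iff (sum_mul_sq_pos hd0 hg).ne').mp heq
    have hsupp : ∀ l, l ≠ lstar → g l = 0 := fun l hl => by
      by_contra hgl
      exact hdist l lstar hl (by
        rw [eq_mul_of_sum_mul_sq_eq hle hsum hgl, mul_div_cancel_right₀ _ (hd0 l).ne'])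
    have hg_eq := eq_smul_single_of_forall_ne hsupp
    exact ⟨g lstar, fun h0 => hg (by rw [hg_eq, h0, zero_smul]), hg_eq⟩
  · rintro ⟨c, hc, rfl⟩
    rw [sum_mul_sq_smul_single, sum_mul_sq_smul_single, mul_div_mul_right _ _ (pow_ne_zero 2 hc)]

/-- For diagonal matrices `D₁ = diagonal d1`, `D₀ = diagonal d0` with `d0 l > 0`,
and `lstar` maximizing the ratio `d1 l / d0 l`, every nonzero `g` satisfies
`(gᵀ D₁ g)/(gᵀ D₀ g) ≤ d1 lstar / d0 lstar`; if the ratios are pairwise distinct,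
equality holds iff `g` is a nonzero scalar multiple of `e_{lstar}`. -/
theorem stmt_1 (L : ℕ) (hL : 1 ≤ L) (d1 d0 : Fin L → ℝ) (hd0 : ∀ l, 0 < d0 l)
    (lstar : Fin L) (hmax : ∀ l, d1 l / d0 l ≤ d1 lstar / d0 lstar) :
    (∀ g : Fin L → ℝ, g ≠ 0 →
      (g ⬝ᵥ (Matrix.diagonal d1 *ᵥ g)) / (g ⬝ᵥ (Matrix.diagonal d0 *ᵥ g)) ≤
        d1 lstar / d0 lstar) ∧
    ((∀ i j : Fin L, i ≠ j → d1 i / d0 i ≠ d1 j / d0 j) →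
      ∀ g : Fin L → ℝ, g ≠ 0 →
        ((g ⬝ᵥ (Matrix.diagonal d1 *ᵥ g)) / (g ⬝ᵥ (Matrix.diagonal d0 *ᵥ g)) =
            d1 lstar / d0 lstar ↔
          ∃ c : ℝ, c ≠ 0 ∧ g = c • (Pi.single lstar 1 : Fin L → ℝ))) :=
  stmt_1_general L d1 d0 hd0 lstar hmax
end

section
/- Let (Ω, μ) be a probability space. For integers n, let s_l[n] : Ω → ℝ (l = 0,…,L−1) be source signals and v_i[n] : Ω → ℝ (i = 0,…,M−1) be noise signals, all with square-integrable pairwise products, satisfying: E[s_k[n] s_l[m]] = 0 for k ≠ l; E[s_l[n] s_l[m]] = ρ_l[n−m]; E[v_i[n] v_j[m]] = σ_v² if i = j and n = m, and 0 otherwise; and E[s_l[n] v_i[m]] = 0 for all indices and times. Let A be a real M×L matrix, x_i[n] = Σ_l A_{il} s_l[n] + v_i[n], w ∈ ℝ^M, y[n] = Σ_i w_i x_i[n], b_0 = 1, b_1,…,b_P ∈ ℝ, q_c = Σ_{p=0}^P b_p², and e[n] = y[n] − Σ_{p=1}^P b_p y[n−p]. Then q_c E[y[n]²] − E[e[n]²]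 = Σ_{l=0}^{L−1} g_l² r̂_l, where g = Aᵀ w and r̂_l = Σ_{p,q=0, p≠q}^{P} s_{pq} b_p b_q ρ_l[q−p], with s_{pq} = 1 if p = 0 or q = 0 and s_{pq} = −1 otherwise. In particular the left-hand side does not depend on the noise variance σ_v². -/
/-!
Write `a = (1, -b₁, …, -b_P)` for the prediction-error filter, so that `e[n] = ∑ₚ aₚ y[n-p]`.
Both `q_c E[y²]` and `E[e²]` are then quadratic forms in the autocorrelation
`R k = ∑ₗ gₗ² ρₗ k + σᵥ² ‖w‖² δₖ` of `y`, and their difference is the off-diagonal part of the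
form, because the diagonal terms `aₚ² R 0 = bₚ² R 0` cancel against `q_c R 0`. The noise enters
`R` only at lag `0`, that is, only on the diagonal, so it drops out.
-/

open Matrix MeasureTheory Finset

section FiniteSums

variable {α : Type*} [CommRing α]

theorem sum_mul_mulVec_add {ι κ : Type*} [Fintype ι] [Fintype κ] (A : Matrix κ ι α)
    (w : κ → α) (s : ι → α) (v : κ → α) :
    ∑ i, w i * ((∑ l, A i l * s l) + v i) = ∑ l, (Aᵀ *ᵥ w) l * s l + ∑ i, w i * v i :=
  calc ∑ i, w i * ((∑ l, A i l * s l) + v i) = w ⬝ᵥ (A *ᵥ s + v) := rfl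
    _ = (Aᵀ *ᵥ w) ⬝ᵥ s + w ⬝ᵥ v := by
      rw [dotProduct_add, dotProduct_mulVec, mulVec_transpose]

def errorFilter (b : ℕ → α) (p : ℕ) : α := if p = 0 then b p else -b p

/-- The paper's `r̂` for the autocorrelation `r`. -/
def offDiagForm (b : ℕ → α) (P : ℕ) (r : ℤ → α) : α :=
  ∑ p ∈ range (P + 1), ∑ q ∈ range (P + 1),
    if p ≠ q then (if p = 0 ∨ q = 0 then (1 : α) else -1) * b p * b q * r ((q : ℤ) - (p : ℤ))
    else 0

theorem sum_range_errorFilter_mul {b : ℕ → α} (hb0 : b 0 = 1) (P : ℕ) (f : ℕ → α) :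
    ∑ p ∈ range (P + 1), errorFilter b p * f p = f 0 - ∑ p ∈ Icc 1 P, b p * f p := by
  rw [sum_range_succ', ← Finset.Ico_add_one_right_eq_Icc, sum_Ico_eq_sum_range]
  simp [errorFilter, hb0, sub_eq_neg_add, add_comm 1]

theorem errorFilter_mul_self (b : ℕ → α) (p : ℕ) : errorFilter b p * errorFilter b p = b p ^ 2 := by
  unfold errorFilter; split_ifs <;> ring

theorem neg_errorFilter_mul {b : ℕ → α} {p q : ℕ} (hpq : p ≠ q) :
    -(errorFilter b p * errorFilter b q) = (if p = 0 ∨ q = 0 then (1 : α) else -1) * b p * b q := by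
  unfold errorFilter; split_ifs <;> first | omega | ring

theorem sum_sq_mul_sub_sum_errorFilter (b : ℕ → α) (P : ℕ) (r : ℤ → α) :
    (∑ p ∈ range (P + 1), b p ^ 2) * r 0 -
        ∑ p ∈ range (P + 1), ∑ q ∈ range (P + 1),
          errorFilter b p * errorFilter b q * r ((q : ℤ) - (p : ℤ)) =
      offDiagForm b P r := by
  have hrow : ∀ p ∈ range (P + 1), ∑ q ∈ range (P + 1),
      errorFilter b p * errorFilter b q * r ((q : ℤ) - (p : ℤ)) =
        b p ^ 2 * r 0 - ∑ q ∈ range (P + 1), if p ≠ q then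
          (if p = 0 ∨ q = 0 then (1 : α) else -1) * b p * b q * r ((q : ℤ) - (p : ℤ)) else 0 := by
    intro p hp
    rw [← add_sum_erase _ _ hp, ← sum_filter, filter_ne, sub_self, errorFilter_mul_self,
      sub_eq_add_neg, ← sum_neg_distrib]
    congr 1
    refine sum_congr rfl fun q hq => ?_
    rw [← neg_errorFilter_mul (ne_of_mem_erase hq).symm, neg_mul, neg_neg]
  rw [sum_congr rfl hrow, sum_sub_distrib, sum_mul, sub_sub_cancel, offDiagForm]

theorem offDiagForm_add_ite_zero (b : ℕ → α) (P : ℕ) (r : ℤ → α) (C : α) :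
    offDiagForm b P (fun k => r k + if k = 0 then C else 0) = offDiagForm b P r := by
  refine sum_congr rfl fun p _ => sum_congr rfl fun q _ => ?_
  by_cases hpq : p = q
  · simp [hpq]
  · have hlag : (q : ℤ) - p ≠ 0 := by omega
    simp [hpq, hlag]

theorem offDiagForm_sum_mul {ι : Type*} (t : Finset ι) (b : ℕ → α) (P : ℕ) (c : ι → α)
    (r : ι → ℤ → α) :
    offDiagForm b P (fun k => ∑ l ∈ t, c l * r l k) = ∑ l ∈ t, c l * offDiagForm b P (r l) := by
  simp only [offDiagForm, mul_sum, mul_ite, mul_zero]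
  rw [Finset.sum_comm (s := t)]
  refine sum_congr rfl fun p _ => ?_
  rw [Finset.sum_comm (s := t)]
  refine sum_congr rfl fun q _ => ?_
  split_ifs <;> first | exact sum_congr rfl fun l _ => by ring | simp

theorem sum_mul_sum_eq_sum_sum {ι κ : Type*} (s : Finset ι) (t : Finset κ) (c : ι → α)
    (d : κ → α) (f : ι → α) (g : κ → α) :
    (∑ i ∈ s, c i * f i) * (∑ j ∈ t, d j * g j) = ∑ i ∈ s, ∑ j ∈ t, c i * d j * (f i * g j) := by
  rw [sum_mul_sum]
  exact sum_congr rfl fun i _ => sum_congr rfl fun j _ => by ring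

theorem sum_add_sum_eq_sum_elim {Ω ι κ : Type*} [Fintype ι] [Fintype κ] (g : ι → α) (w : κ → α)
    (s : ι → ℤ → Ω → α) (v : κ → ℤ → Ω → α) (n : ℤ) (ω : Ω) :
    ∑ l, g l * s l n ω + ∑ i, w i * v i n ω = ∑ a, Sum.elim g w a * Sum.elim s v a n ω :=
  (Fintype.sum_sum_type fun a => Sum.elim g w a * Sum.elim s v a n ω).symm

end FiniteSums

section Moments

variable {Ω : Type*} [MeasurableSpace Ω] {μ : Measure Ω}

theorem integrable_sum_mul_sum {ι κ : Type*} (s : Finset ι) (t : Finset κ) (c : ι → ℝ)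
    (d : κ → ℝ) {f : ι → Ω → ℝ} {g : κ → Ω → ℝ}
    (hfg : ∀ i ∈ s, ∀ j ∈ t, Integrable (fun ω => f i ω * g j ω) μ) :
    Integrable (fun ω => (∑ i ∈ s, c i * f i ω) * (∑ j ∈ t, d j * g j ω)) μ := by
  simp_rw [sum_mul_sum_eq_sum_sum]
  exact integrable_finsetSum _ fun i hi =>
    integrable_finsetSum _ fun j hj => (hfg i hi j hj).const_mul _

theorem integral_sum_mul_sum {ι κ : Type*} (s : Finset ι) (t : Finset κ) (c : ι → ℝ)
    (d : κ → ℝ) {f : ι → Ω → ℝ} {g : κ → Ω → ℝ}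
    (hfg : ∀ i ∈ s, ∀ j ∈ t, Integrable (fun ω => f i ω * g j ω) μ) :
    ∫ ω, (∑ i ∈ s, c i * f i ω) * (∑ j ∈ t, d j * g j ω) ∂μ =
      ∑ i ∈ s, ∑ j ∈ t, c i * d j * ∫ ω, f i ω * g j ω ∂μ := by
  simp_rw [sum_mul_sum_eq_sum_sum]
  rw [integral_finsetSum _ fun i hi =>
    integrable_finsetSum _ fun j hj => (hfg i hi j hj).const_mul _]
  refine sum_congr rfl fun i hi => ?_
  rw [integral_finsetSum _ fun j hj => (hfg i hi j hj).const_mul _]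
  simp_rw [integral_const_mul]

structure UncorrelatedSourcesWhiteNoise {ι κ : Type*} [DecidableEq κ] (μ : Measure Ω)
    (s : ι → ℤ → Ω → ℝ) (v : κ → ℤ → Ω → ℝ) (ρ : ι → ℤ → ℝ) (σ2 : ℝ) : Prop where
  integrable_source_mul_source : ∀ k l n m, Integrable (fun ω => s k n ω * s l m ω) μ
  integrable_source_mul_noise : ∀ l i n m, Integrable (fun ω => s l n ω * v i m ω) μ
  integrable_noise_mul_noise : ∀ i j n m, Integrable (fun ω => v i n ω * v j m ω) μ
  integral_source_mul_source_of_ne :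
    ∀ k l n m, k ≠ l → ∫ ω, s k n ω * s l m ω ∂μ = 0
  integral_source_mul_source_self : ∀ l n m, ∫ ω, s l n ω * s l m ω ∂μ = ρ l (n - m)
  integral_noise_mul_noise :
    ∀ i j n m, ∫ ω, v i n ω * v j m ω ∂μ = if i = j ∧ n = m then σ2 else 0
  integral_source_mul_noise : ∀ l i n m, ∫ ω, s l n ω * v i m ω ∂μ = 0

namespace UncorrelatedSourcesWhiteNoise

variable {ι κ : Type*} [DecidableEq κ] {s : ι → ℤ → Ω → ℝ} {v : κ → ℤ → Ω → ℝ}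
  {ρ : ι → ℤ → ℝ} {σ2 : ℝ}

theorem integrable_elim_mul_elim (h : UncorrelatedSourcesWhiteNoise μ s v ρ σ2)
    (a a' : ι ⊕ κ) (n m : ℤ) :
    Integrable (fun ω => Sum.elim s v a n ω * Sum.elim s v a' m ω) μ := by
  rcases a with l | i <;> rcases a' with k | j
  · exact h.integrable_source_mul_source l k n m
  · exact h.integrable_source_mul_noise l j n m
  · simpa only [Sum.elim_inl, Sum.elim_inr, mul_comm] using h.integrable_source_mul_noise k i m n
  · exact h.integrable_noise_mul_noise i j n m

theorem integral_source_mul_source [DecidableEq ι] (h : UncorrelatedSourcesWhiteNoise μ s v ρ σ2)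
    (k l : ι) (n m : ℤ) :
    ∫ ω, s k n ω * s l m ω ∂μ = if k = l then ρ k (n - m) else 0 := by
  split_ifs with hkl
  · rw [hkl, h.integral_source_mul_source_self]
  · exact h.integral_source_mul_source_of_ne k l n m hkl

theorem integral_noise_mul_source (h : UncorrelatedSourcesWhiteNoise μ s v ρ σ2)
    (i : κ) (l : ι) (n m : ℤ) : ∫ ω, v i n ω * s l m ω ∂μ = 0 := by
  simpa only [mul_comm] using h.integral_source_mul_noise l i m n

variable [Fintype ι] [Fintype κ] {g : ι → ℝ} {w : κ → ℝ} {y : ℤ → Ω → ℝ}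

theorem integrable_mixture_mul (h : UncorrelatedSourcesWhiteNoise μ s v ρ σ2)
    (hy : ∀ n ω, y n ω = ∑ l, g l * s l n ω + ∑ i, w i * v i n ω) (n m : ℤ) :
    Integrable (fun ω => y n ω * y m ω) μ := by
  simp_rw [hy, sum_add_sum_eq_sum_elim]
  exact integrable_sum_mul_sum _ _ _ _ fun a _ a' _ => h.integrable_elim_mul_elim a a' n m

theorem integral_mixture_mul [DecidableEq ι] (h : UncorrelatedSourcesWhiteNoise μ s v ρ σ2)
    (hy : ∀ n ω, y n ω = ∑ l, g l * s l n ω + ∑ i, w i * v i n ω) (n m : ℤ) :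
    ∫ ω, y n ω * y m ω ∂μ =
      ∑ l, g l ^ 2 * ρ l (n - m) + if n - m = 0 then σ2 * ∑ i, w i ^ 2 else 0 := by
  simp_rw [hy, sum_add_sum_eq_sum_elim]
  rw [integral_sum_mul_sum _ _ _ _ fun a _ a' _ => h.integrable_elim_mul_elim a a' n m]
  simp only [Fintype.sum_sum_type, Sum.elim_inl, Sum.elim_inr, h.integral_source_mul_source,
    h.integral_source_mul_noise, h.integral_noise_mul_source, h.integral_noise_mul_noise,
    mul_zero, sum_const_zero, add_zero, zero_add, mul_ite, ite_and, sum_ite_eq, mem_univ, if_true,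
    sub_eq_zero]
  congr 1
  · exact sum_congr rfl fun l _ => by ring
  · split_ifs
    · rw [mul_sum]
      exact sum_congr rfl fun i _ => by ring
    · exact sum_const_zero

end UncorrelatedSourcesWhiteNoise

end Moments

theorem stmt_7_general (Ω : Type*) [MeasureSpace Ω]
    (L M P : ℕ)
    (s : Fin L → ℤ → Ω → ℝ) (v : Fin M → ℤ → Ω → ℝ)
    (ρ : Fin L → ℤ → ℝ) (σv : ℝ)
    (hss_int : ∀ (k l : Fin L) (n m : ℤ), Integrable fun ω => s k n ω * s l m ω)
    (hsv_int : ∀ (l : Fin L) (i : Fin M) (n m : ℤ), Integrable fun ω => s l n ω * v i m ω)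
    (hvv_int : ∀ (i j : Fin M) (n m : ℤ), Integrable fun ω => v i n ω * v j m ω)
    (hss : ∀ (k l : Fin L) (n m : ℤ), k ≠ l → ∫ ω, s k n ω * s l m ω = 0)
    (hauto : ∀ (l : Fin L) (n m : ℤ), ∫ ω, s l n ω * s l m ω = ρ l (n - m))
    (hvv : ∀ (i j : Fin M) (n m : ℤ),
      ∫ ω, v i n ω * v j m ω = if i = j ∧ n = m then σv ^ 2 else 0)
    (hsv : ∀ (l : Fin L) (i : Fin M) (n m : ℤ), ∫ ω, s l n ω * v i m ω = 0)
    (A : Matrix (Fin M) (Fin L) ℝ) (w : Fin M → ℝ)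
    (x : Fin M → ℤ → Ω → ℝ)
    (hx : ∀ i n ω, x i n ω = (∑ l, A i l * s l n ω) + v i n ω)
    (y : ℤ → Ω → ℝ) (hy : ∀ n ω, y n ω = ∑ i, w i * x i n ω)
    (b : ℕ → ℝ) (hb0 : b 0 = 1)
    (e : ℤ → Ω → ℝ)
    (he : ∀ n ω, e n ω = y n ω - ∑ p ∈ Finset.Icc 1 P, b p * y (n - (p : ℤ)) ω) :
    ∀ n : ℤ,
      (∑ p ∈ Finset.range (P + 1), (b p) ^ 2) * (∫ ω, (y n ω) ^ 2) - ∫ ω, (e n ω) ^ 2 =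
        ∑ l, ((Aᵀ *ᵥ w) l) ^ 2 *
          (∑ p ∈ Finset.range (P + 1), ∑ q ∈ Finset.range (P + 1),
            if p ≠ q then
              (if p = 0 ∨ q = 0 then (1 : ℝ) else -1) * b p * b q * ρ l ((q : ℤ) - (p : ℤ))
            else 0) := by
  intro n
  have hmodel : UncorrelatedSourcesWhiteNoise volume s v ρ (σv ^ 2) :=
    ⟨hss_int, hsv_int, hvv_int, hss, hauto, hvv, hsv⟩
  have hy_mix : ∀ n ω, y n ω = ∑ l, (Aᵀ *ᵥ w) l * s l n ω + ∑ i, w i * v i n ω := fun n ω => by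
    simp only [hy, hx]
    exact sum_mul_mulVec_add A w (s · n ω) (v · n ω)
  set R : ℤ → ℝ := fun k =>
    ∑ l, (Aᵀ *ᵥ w) l ^ 2 * ρ l k + if k = 0 then σv ^ 2 * ∑ i, w i ^ 2 else 0
  have hR : ∀ n m, ∫ ω, y n ω * y m ω = R (n - m) := hmodel.integral_mixture_mul hy_mix
  have he_filter : ∀ ω, e n ω = ∑ p ∈ range (P + 1), errorFilter b p * y (n - p) ω := fun ω => by
    rw [he, sum_range_errorFilter_mul hb0]
    simp
  have hEy : ∫ ω, y n ω ^ 2 = R 0 := by simp_rw [sq, hR, sub_self]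
  have hEe : ∫ ω, e n ω ^ 2 = ∑ p ∈ range (P + 1), ∑ q ∈ range (P + 1),
      errorFilter b p * errorFilter b q * R ((q : ℤ) - (p : ℤ)) := by
    simp_rw [sq, he_filter]
    rw [integral_sum_mul_sum _ _ _ _ fun p _ q _ => hmodel.integrable_mixture_mul hy_mix _ _]
    simp_rw [hR, sub_sub_sub_cancel_left]
  rw [hEy, hEe, sum_sq_mul_sub_sum_errorFilter, offDiagForm_add_ite_zero, offDiagForm_sum_mul]
  rfl

/-- Noise-free numerator of the dual-linear-predictor cost: under the noisy mixing
model `x[n] = A s[n] + v[n]` with spatially uncorrelated wide-sense-stationary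
sources (autocorrelations `ρ l`) and spatially and temporally white noise of
variance `σv²` uncorrelated with the sources, with `y[n] = wᵀ x[n]` and linear
prediction error `e[n] = y[n] − ∑_{p=1}^P b p y[n−p]` (`b 0 = 1`), one has
`q_c E[y[n]²] − E[e[n]²] = ∑_l g_l² r̂_l` with `g = Aᵀ w` and
`r̂_l = ∑_{p≠q} s_{pq} b_p b_q ρ_l[q−p]`; in particular this is independent of `σv²`. -/
theorem stmt_7 (Ω : Type*) [MeasureSpace Ω] [IsProbabilityMeasure (volume : Measure Ω)]
    (L M P : ℕ)
    (s : Fin L → ℤ → Ω → ℝ) (v : Fin M → ℤ → Ω → ℝ)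
    (ρ : Fin L → ℤ → ℝ) (σv : ℝ)
    (hss_int : ∀ (k l : Fin L) (n m : ℤ), Integrable fun ω => s k n ω * s l m ω)
    (hsv_int : ∀ (l : Fin L) (i : Fin M) (n m : ℤ), Integrable fun ω => s l n ω * v i m ω)
    (hvv_int : ∀ (i j : Fin M) (n m : ℤ), Integrable fun ω => v i n ω * v j m ω)
    (hss : ∀ (k l : Fin L) (n m : ℤ), k ≠ l → ∫ ω, s k n ω * s l m ω = 0)
    (hauto : ∀ (l : Fin L) (n m : ℤ), ∫ ω, s l n ω * s l m ω = ρ l (n - m))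
    (hvv : ∀ (i j : Fin M) (n m : ℤ),
      ∫ ω, v i n ω * v j m ω = if i = j ∧ n = m then σv ^ 2 else 0)
    (hsv : ∀ (l : Fin L) (i : Fin M) (n m : ℤ), ∫ ω, s l n ω * v i m ω = 0)
    (A : Matrix (Fin M) (Fin L) ℝ) (w : Fin M → ℝ)
    (x : Fin M → ℤ → Ω → ℝ)
    (hx : ∀ i n ω, x i n ω = (∑ l, A i l * s l n ω) + v i n ω)
    (y : ℤ → Ω → ℝ) (hy : ∀ n ω, y n ω = ∑ i, w i * x i n ω)
    (b : ℕ → ℝ) (hb0 : b 0 = 1)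
    (e : ℤ → Ω → ℝ)
    (he : ∀ n ω, e n ω = y n ω - ∑ p ∈ Finset.Icc 1 P, b p * y (n - (p : ℤ)) ω) :
    ∀ n : ℤ,
      (∑ p ∈ Finset.range (P + 1), (b p) ^ 2) * (∫ ω, (y n ω) ^ 2) - ∫ ω, (e n ω) ^ 2 =
        ∑ l, ((Aᵀ *ᵥ w) l) ^ 2 *
          (∑ p ∈ Finset.range (P + 1), ∑ q ∈ Finset.range (P + 1),
            if p ≠ q then
              (if p = 0 ∨ q = 0 then (1 : ℝ) else -1) * b p * b q * ρ l ((q : ℤ) - (p : ℤ))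
            else 0) :=
  stmt_7_general Ω L M P s v ρ σv hss_int hsv_int hvv_int hss hauto hvv hsv A w x hx y hy b hb0 e he
end

section
/- Let A be an invertible real L×L matrix and let r̂_0,…,r̂_{L−1}, r̃_0,…,r̃_{L−1} be real numbers with every r̃_l > 0 and the ratios r̂_l/r̃_l pairwise distinct; let l* be the index minimizing r̂_l/r̃_l. For w ∈ ℝ^L with Aᵀ w ≠ 0 define J(w) = (Σ_l (Aᵀw)_l² r̂_l)/(Σ_l (Aᵀw)_l² r̃_l). Then J(w) ≥ r̂_{l*}/r̃_{l*} for all such w, with equality if and only if Aᵀ w is a nonzero scalar multiple of the standard basis vector e_{l*}. In particular, minimizing J over all w with Aᵀ w ≠ 0 results in extraction of the source with the minimum 'normalized' autocorrelation value r̂_l/r̃_l. -/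
/-!
Write `g = Aᵀ w` and `m = r̂_{l*} / r̃_{l*}`. Minimality of `m` means `m r̃_l ≤ r̂_l` for every `l`, so
`∑ g_l² r̂_l - m ∑ g_l² r̃_l = ∑ g_l² (r̂_l - m r̃_l)` is a sum of nonnegative terms; since the
denominator is positive this gives `J(w) ≥ m`. Equality forces every term to vanish, and by
distinctness of the ratios `r̂_l - m r̃_l > 0` for `l ≠ l*`, so `g` is supported on `l*`. As `Aᵀ` is
invertible, `g = e_{l*}` is attained.
-/

open Matrix Finset

section WeightedQuotient

variable {ι : Type*} [Fintype ι] {a b g : ι → ℝ} {m : ℝ}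

lemma sum_sq_mul_pos (hb : ∀ i, 0 < b i) (hg : g ≠ 0) : 0 < ∑ i, g i ^ 2 * b i := by
  obtain ⟨i, hi⟩ := Function.ne_iff.mp hg
  refine sum_pos' (fun j _ => mul_nonneg (sq_nonneg _) (hb j).le) ⟨i, mem_univ i, ?_⟩
  exact mul_pos (sq_pos_of_ne_zero hi) (hb i)

lemma sum_sq_mul_sub_mul_sum_sq_mul :
    ∑ i, g i ^ 2 * a i - m * ∑ i, g i ^ 2 * b i = ∑ i, g i ^ 2 * (a i - m * b i) := by
  rw [mul_sum, ← sum_sub_distrib]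
  exact sum_congr rfl fun i _ => by ring

lemma le_div_sum_sq_mul (hb : ∀ i, 0 < b i) (hm : ∀ i, m * b i ≤ a i) (hg : g ≠ 0) :
    m ≤ (∑ i, g i ^ 2 * a i) / ∑ i, g i ^ 2 * b i := by
  rw [le_div_iff₀ (sum_sq_mul_pos hb hg), ← sub_nonneg, sum_sq_mul_sub_mul_sum_sq_mul]
  exact sum_nonneg fun i _ => mul_nonneg (sq_nonneg _) (sub_nonneg.mpr (hm i))

lemma div_sum_sq_mul_eq_iff (hb : ∀ i, 0 < b i) (hm : ∀ i, m * b i ≤ a i) (hg : g ≠ 0) :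
    (∑ i, g i ^ 2 * a i) / ∑ i, g i ^ 2 * b i = m ↔ ∀ i, m * b i < a i → g i = 0 := by
  have hterm : ∀ i ∈ univ, 0 ≤ g i ^ 2 * (a i - m * b i) :=
    fun i _ => mul_nonneg (sq_nonneg _) (sub_nonneg.mpr (hm i))
  rw [div_eq_iff (sum_sq_mul_pos hb hg).ne', ← sub_eq_zero,
    sum_sq_mul_sub_mul_sum_sq_mul, sum_eq_zero_iff_of_nonneg hterm]
  refine forall_congr' fun i => ⟨fun h hi => ?_, fun h => ?_⟩
  · simpa [(sub_pos.mpr hi).ne'] using h (mem_univ i)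
  · rcases (hm i).lt_or_eq with hi | hi
    · simp [h hi]
    · simp [hi]

end WeightedQuotient

lemma exists_ne_zero_eq_smul_single_iff {ι R : Type*} [DecidableEq ι] [Semiring R]
    [NoZeroDivisors R] {g : ι → R} (k : ι) :
    (∃ c : R, c ≠ 0 ∧ g = c • Pi.single k 1) ↔ g ≠ 0 ∧ ∀ i, i ≠ k → g i = 0 := by
  constructor
  · rintro ⟨c, hc, rfl⟩
    refine ⟨fun h => hc (by simpa using congrFun h k), fun i hi => by simp [hi]⟩
  · rintro ⟨hg, hsupp⟩
    refine ⟨g k, fun hk => hg ?_, funext fun i => ?_⟩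
    · funext i
      by_cases hi : i = k
      · subst hi; exact hk
      · exact hsupp i hi
    · by_cases hi : i = k
      · subst hi; simp
      · simp [hi, hsupp i hi]

theorem stmt_10_general (L : ℕ) (A : Matrix (Fin L) (Fin L) ℝ) (hA : IsUnit A)
    (rhat rtil : Fin L → ℝ) (hrtil : ∀ l, 0 < rtil l)
    (hdist : ∀ i j : Fin L, i ≠ j → rhat i / rtil i ≠ rhat j / rtil j)
    (lstar : Fin L) (hmin : ∀ l, rhat lstar / rtil lstar ≤ rhat l / rtil l) :
    (∀ w : Fin L → ℝ, Aᵀ *ᵥ w ≠ 0 →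
      rhat lstar / rtil lstar ≤
        (∑ l, ((Aᵀ *ᵥ w) l) ^ 2 * rhat l) / (∑ l, ((Aᵀ *ᵥ w) l) ^ 2 * rtil l)) ∧
    (∀ w : Fin L → ℝ, Aᵀ *ᵥ w ≠ 0 →
      ((∑ l, ((Aᵀ *ᵥ w) l) ^ 2 * rhat l) / (∑ l, ((Aᵀ *ᵥ w) l) ^ 2 * rtil l) =
          rhat lstar / rtil lstar ↔
        ∃ c : ℝ, c ≠ 0 ∧ Aᵀ *ᵥ w = c • (Pi.single lstar 1 : Fin L → ℝ))) ∧
    (∃ w : Fin L → ℝ, Aᵀ *ᵥ w ≠ 0 ∧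
      (∑ l, ((Aᵀ *ᵥ w) l) ^ 2 * rhat l) / (∑ l, ((Aᵀ *ᵥ w) l) ^ 2 * rtil l) =
        rhat lstar / rtil lstar) := by
  have hm : ∀ l, rhat lstar / rtil lstar * rtil l ≤ rhat l :=
    fun l => (le_div_iff₀ (hrtil l)).mp (hmin l)
  have hm_lt_iff : ∀ l, rhat lstar / rtil lstar * rtil l < rhat l ↔ l ≠ lstar := fun l =>
    ⟨fun h hl => h.ne (by rw [hl, div_mul_cancel₀ _ (hrtil lstar).ne']),
      fun hl => (lt_div_iff₀ (hrtil l)).mp ((hmin l).lt_of_ne (hdist l lstar hl).symm)⟩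
  have hequality : ∀ w : Fin L → ℝ, Aᵀ *ᵥ w ≠ 0 →
      ((∑ l, ((Aᵀ *ᵥ w) l) ^ 2 * rhat l) / (∑ l, ((Aᵀ *ᵥ w) l) ^ 2 * rtil l) =
          rhat lstar / rtil lstar ↔
        ∃ c : ℝ, c ≠ 0 ∧ Aᵀ *ᵥ w = c • (Pi.single lstar 1 : Fin L → ℝ)) := fun w hw => by
    simp only [div_sum_sq_mul_eq_iff hrtil hm hw, hm_lt_iff, exists_ne_zero_eq_smul_single_iff,
      hw, ne_eq, not_false_eq_true, true_and]
  obtain ⟨w, hw⟩ := mulVec_surjective_iff_isUnit.mpr ((isUnit_transpose A).mpr hA)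
    (Pi.single lstar (1 : ℝ))
  have hw0 : Aᵀ *ᵥ w ≠ 0 := by simp [hw]
  exact ⟨fun w hw => le_div_sum_sq_mul hrtil hm hw, hequality, w, hw0,
    (hequality w hw0).mpr ⟨1, one_ne_zero, by rw [hw, one_smul]⟩⟩

/-- Dual-linear-predictor extraction principle: for invertible `A`, positive `r̃ l`,
pairwise distinct ratios `r̂ l / r̃ l` minimized at `lstar`, the cost
`J(w) = (∑_l (Aᵀw)_l² r̂_l)/(∑_l (Aᵀw)_l² r̃_l)` satisfies `J(w) ≥ r̂ lstar / r̃ lstar`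
for all `w` with `Aᵀ w ≠ 0`, with equality iff `Aᵀ w` is a nonzero scalar multiple
of `e_{lstar}`; the minimum is attained, i.e. minimizing `J` extracts the source
with the minimum normalized autocorrelation. -/
theorem stmt_10 (L : ℕ) (hL : 1 ≤ L) (A : Matrix (Fin L) (Fin L) ℝ) (hA : IsUnit A)
    (rhat rtil : Fin L → ℝ) (hrtil : ∀ l, 0 < rtil l)
    (hdist : ∀ i j : Fin L, i ≠ j → rhat i / rtil i ≠ rhat j / rtil j)
    (lstar : Fin L) (hmin : ∀ l, rhat lstar / rtil lstar ≤ rhat l / rtil l) :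
    (∀ w : Fin L → ℝ, Aᵀ *ᵥ w ≠ 0 →
      rhat lstar / rtil lstar ≤
        (∑ l, ((Aᵀ *ᵥ w) l) ^ 2 * rhat l) / (∑ l, ((Aᵀ *ᵥ w) l) ^ 2 * rtil l)) ∧
    (∀ w : Fin L → ℝ, Aᵀ *ᵥ w ≠ 0 →
      ((∑ l, ((Aᵀ *ᵥ w) l) ^ 2 * rhat l) / (∑ l, ((Aᵀ *ᵥ w) l) ^ 2 * rtil l) =
          rhat lstar / rtil lstar ↔
        ∃ c : ℝ, c ≠ 0 ∧ Aᵀ *ᵥ w = c • (Pi.single lstar 1 : Fin L → ℝ))) ∧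
    (∃ w : Fin L → ℝ, Aᵀ *ᵥ w ≠ 0 ∧
      (∑ l, ((Aᵀ *ᵥ w) l) ^ 2 * rhat l) / (∑ l, ((Aᵀ *ᵥ w) l) ^ 2 * rtil l) =
        rhat lstar / rtil lstar) :=
  stmt_10_general L A hA rhat rtil hrtil hdist lstar hmin
end

section
/- Let A be an invertible real L×L matrix, and let D_1, D_0 be real diagonal L×L matrices with diagonal entries d1_l and d0_l, where every d0_l ≠ 0. Set R_Δ = A D_1 Aᵀ and R_0 = A D_0 Aᵀ. Then: (i) for every l, the vector w_l = (Aᵀ)⁻¹ e_l satisfies the generalized eigenvalue equation R_Δ w_l = (d1_l/d0_l) R_0 w_l; (ii) if moreover the ratios d1_l/d0_l are pairwise distinct, then for every nonzero w ∈ ℝ^L and λ ∈ ℝ with R_Δ w = λ R_0 w, there exists l such that λ = d1_l/d0_l and w is a scalar multiple of (Aᵀ)⁻¹ e_l. Hence the generalized eigenvectors of the pencil (R_Δ, R_0) are, up to scaling, exactly the rows of the demixing matrix A⁻¹, and all sources are recovered. -/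
/-!
Substituting `v = Aᵀ w` and cancelling the invertible `A` on the left turns the pencil
`(A D₁ Aᵀ, A D₀ Aᵀ)` into the diagonal pencil `(D₁, D₀)`, which acts coordinatewise:
`d1 i * v i = λ * d0 i * v i`. So every nonzero coordinate of an eigenvector `v` forces
`λ = d1 i / d0 i`, and distinct ratios leave room for only one such coordinate.
-/

open Matrix

namespace Matrix

variable {n K : Type*} [Fintype n] [DecidableEq n] [Field K]

theorem conj_mulVec_eq_smul_conj_mulVec_iff {A : Matrix n n K} (hA : IsUnit A)
    (M N : Matrix n n K) (w : n → K) (lam : K) :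
    (A * M * Aᵀ) *ᵥ w = lam • ((A * N * Aᵀ) *ᵥ w) ↔
      M *ᵥ (Aᵀ *ᵥ w) = lam • (N *ᵥ (Aᵀ *ᵥ w)) := by
  simp only [← mulVec_mulVec, ← mulVec_smul]
  exact (mulVec_injective_iff_isUnit.2 hA).eq_iff

theorem mulVec_nonsing_inv_mulVec {A : Matrix n n K} (hA : IsUnit A) (v : n → K) :
    A *ᵥ (A⁻¹ *ᵥ v) = v := by
  rw [mulVec_mulVec, mul_nonsing_inv A ((isUnit_iff_isUnit_det A).1 hA), one_mulVec]

theorem nonsing_inv_mulVec_mulVec {A : Matrix n n K} (hA : IsUnit A) (v : n → K) :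
    A⁻¹ *ᵥ (A *ᵥ v) = v := by
  rw [mulVec_mulVec, nonsing_inv_mul A ((isUnit_iff_isUnit_det A).1 hA), one_mulVec]

variable {d1 d0 : n → K}

theorem diagonal_mulVec_single_eq_div_smul (hd0 : ∀ i, d0 i ≠ 0) (l : n) :
    diagonal d1 *ᵥ Pi.single l 1 = (d1 l / d0 l) • (diagonal d0 *ᵥ Pi.single l 1) := by
  rw [diagonal_mulVec_single, diagonal_mulVec_single, ← Pi.single_smul',
    smul_eq_mul, mul_one, mul_one, div_mul_cancel₀ _ (hd0 l)]

theorem eq_div_of_diagonal_mulVec_eq_smul (hd0 : ∀ i, d0 i ≠ 0) {v : n → K} {lam : K}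
    (hv : diagonal d1 *ᵥ v = lam • (diagonal d0 *ᵥ v)) {i : n} (hi : v i ≠ 0) :
    lam = d1 i / d0 i := by
  have hcoord : d1 i * v i = lam * (d0 i * v i) := by
    simpa [mulVec_diagonal] using congrFun hv i
  rw [eq_div_iff (hd0 i)]
  exact mul_right_cancel₀ hi (by rw [hcoord, mul_assoc])

theorem exists_eq_div_and_eq_smul_single_of_diagonal_mulVec_eq_smul
    (hd0 : ∀ i, d0 i ≠ 0) (hdist : ∀ i j, i ≠ j → d1 i / d0 i ≠ d1 j / d0 j)
    {v : n → K} (hv0 : v ≠ 0) {lam : K} (hv : diagonal d1 *ᵥ v = lam • (diagonal d0 *ᵥ v)) :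
    ∃ l, lam = d1 l / d0 l ∧ v = v l • Pi.single l 1 := by
  obtain ⟨l, hl⟩ := Function.ne_iff.1 hv0
  have hlam := eq_div_of_diagonal_mulVec_eq_smul hd0 hv hl
  refine ⟨l, hlam, funext fun i ↦ ?_⟩
  rcases eq_or_ne i l with rfl | hil
  · simp
  · simp only [Pi.smul_apply, Pi.single_eq_of_ne hil, smul_zero]
    by_contra hi
    exact hdist i l hil (hlam ▸ eq_div_of_diagonal_mulVec_eq_smul hd0 hv hi).symm

end Matrix

theorem stmt_12_general (L : ℕ) (A : Matrix (Fin L) (Fin L) ℝ) (hA : IsUnit A)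
    (d1 d0 : Fin L → ℝ) (hd0 : ∀ l, d0 l ≠ 0) :
    (∀ l : Fin L,
      (A * Matrix.diagonal d1 * Aᵀ) *ᵥ ((Aᵀ)⁻¹ *ᵥ (Pi.single l 1 : Fin L → ℝ)) =
        (d1 l / d0 l) •
          ((A * Matrix.diagonal d0 * Aᵀ) *ᵥ ((Aᵀ)⁻¹ *ᵥ (Pi.single l 1 : Fin L → ℝ)))) ∧
    ((∀ i j : Fin L, i ≠ j → d1 i / d0 i ≠ d1 j / d0 j) →
      ∀ w : Fin L → ℝ, w ≠ 0 → ∀ lam : ℝ,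
        (A * Matrix.diagonal d1 * Aᵀ) *ᵥ w =
            lam • ((A * Matrix.diagonal d0 * Aᵀ) *ᵥ w) →
          ∃ l : Fin L, lam = d1 l / d0 l ∧
            ∃ c : ℝ, w = c • ((Aᵀ)⁻¹ *ᵥ (Pi.single l 1 : Fin L → ℝ))) := by
  have hAT : IsUnit Aᵀ := (isUnit_transpose A).2 hA
  refine ⟨fun l ↦ ?_, fun hdist w hw lam heq ↦ ?_⟩
  · rw [conj_mulVec_eq_smul_conj_mulVec_iff hA, mulVec_nonsing_inv_mulVec hAT]
    exact diagonal_mulVec_single_eq_div_smul hd0 l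
  · rw [conj_mulVec_eq_smul_conj_mulVec_iff hA] at heq
    have hv0 : Aᵀ *ᵥ w ≠ 0 := fun h ↦ hw (by
      rw [← nonsing_inv_mulVec_mulVec hAT w, h, mulVec_zero])
    obtain ⟨l, hlam, hv⟩ :=
      exists_eq_div_and_eq_smul_single_of_diagonal_mulVec_eq_smul hd0 hdist hv0 heq
    refine ⟨l, hlam, (Aᵀ *ᵥ w) l, ?_⟩
    rw [← mulVec_smul, ← hv, nonsing_inv_mulVec_mulVec hAT]

/-- CCA as a generalized eigenvalue problem: with `R_Δ = A D₁ Aᵀ` and `R₀ = A D₀ Aᵀ`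
for invertible `A` and diagonal `D₁, D₀` (with `d0 l ≠ 0`):
(i) each `w_l = (Aᵀ)⁻¹ e_l` satisfies `R_Δ w_l = (d1 l / d0 l) R₀ w_l`;
(ii) if the ratios `d1 l / d0 l` are pairwise distinct, every generalized eigenpair
`(λ, w)` with `w ≠ 0` has `λ = d1 l / d0 l` and `w` a scalar multiple of `(Aᵀ)⁻¹ e_l`
for some `l`: the generalized eigenvectors are, up to scaling, the rows of `A⁻¹`. -/
theorem stmt_12 (L : ℕ) (hL : 1 ≤ L) (A : Matrix (Fin L) (Fin L) ℝ) (hA : IsUnit A)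
    (d1 d0 : Fin L → ℝ) (hd0 : ∀ l, d0 l ≠ 0) :
    (∀ l : Fin L,
      (A * Matrix.diagonal d1 * Aᵀ) *ᵥ ((Aᵀ)⁻¹ *ᵥ (Pi.single l 1 : Fin L → ℝ)) =
        (d1 l / d0 l) •
          ((A * Matrix.diagonal d0 * Aᵀ) *ᵥ ((Aᵀ)⁻¹ *ᵥ (Pi.single l 1 : Fin L → ℝ)))) ∧
    ((∀ i j : Fin L, i ≠ j → d1 i / d0 i ≠ d1 j / d0 j) →
      ∀ w : Fin L → ℝ, w ≠ 0 → ∀ lam : ℝ,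
        (A * Matrix.diagonal d1 * Aᵀ) *ᵥ w =
            lam • ((A * Matrix.diagonal d0 * Aᵀ) *ᵥ w) →
          ∃ l : Fin L, lam = d1 l / d0 l ∧
            ∃ c : ℝ, w = c • ((Aᵀ)⁻¹ *ᵥ (Pi.single l 1 : Fin L → ℝ))) :=
  stmt_12_general L A hA d1 d0 hd0
end

section
/- Let (Ω, μ) be a probability space and S_0, S'_0, …, S_{L−1}, S'_{L−1} : Ω → ℝ be random variables with square-integrable pairwise products satisfying E[S_k S_l] = 0 and E[S_k S'_l] = 0 for k ≠ l, E[S_l S_l] = ρ_l[0] > 0 and E[S_l S'_l] = ρ_l[Δ] for each l. Let g ∈ ℝ^L be nonzero and define X = Σ_l g_l S_l and X' = Σ_l g_l S'_l. Then the normalized autocorrelation of the mixture satisfies E[X X'] / E[X²] ≤ max_{l} ρ_l[Δ]/ρ_l[0]; that is, the normalized autocorrelation of any linear combination of spatially uncorrelated signals is at most the maximum of the individual signals' normalized autocorrelations. -/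
/-!
Expanding both products, the uncorrelatedness hypotheses kill every cross term, so
`E[X X'] = ∑ g_l² ρ_l[Δ]` and `E[X²] = ∑ g_l² ρ_l[0]`. The quotient is then a weighted
mediant of the ratios `ρ_l[Δ] / ρ_l[0]` with nonnegative weights `g_l² ρ_l[0]`, hence at most
their maximum.
-/

open MeasureTheory Finset

theorem Finset.sum_mul_div_sum_mul_le_sup'_div {ι 𝕜 : Type*} [Field 𝕜] [LinearOrder 𝕜]
    [IsStrictOrderedRing 𝕜] (s : Finset ι) (hs : s.Nonempty) {w a b : ι → 𝕜}
    (hw : ∀ i ∈ s, 0 ≤ w i) (hb : ∀ i ∈ s, 0 < b i) (hwb : 0 < ∑ i ∈ s, w i * b i) :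
    (∑ i ∈ s, w i * a i) / (∑ i ∈ s, w i * b i) ≤ s.sup' hs (fun i => a i / b i) := by
  rw [div_le_iff₀ hwb, mul_sum]
  refine sum_le_sum fun i hi => ?_
  have hab : a i ≤ s.sup' hs (fun i => a i / b i) * b i :=
    (div_le_iff₀ (hb i hi)).mp (le_sup' (fun i => a i / b i) hi)
  calc w i * a i ≤ w i * (s.sup' hs (fun i => a i / b i) * b i) :=
        mul_le_mul_of_nonneg_left hab (hw i hi)
    _ = s.sup' hs (fun i => a i / b i) * (w i * b i) := by ring

theorem Finset.sum_sq_mul_pos_of_ne_zero {ι 𝕜 : Type*} [Fintype ι] [Field 𝕜] [LinearOrder 𝕜]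
    [IsStrictOrderedRing 𝕜] {g ρ : ι → 𝕜} (hg : g ≠ 0) (hρ : ∀ i, 0 < ρ i) :
    0 < ∑ i, g i ^ 2 * ρ i := by
  obtain ⟨i, hi⟩ := Function.ne_iff.mp hg
  exact sum_pos' (fun j _ => mul_nonneg (sq_nonneg _) (hρ j).le)
    ⟨i, mem_univ i, mul_pos (sq_pos_of_ne_zero hi) (hρ i)⟩

theorem MeasureTheory.integral_sum_mul_sum_of_integral_mul_eq_zero {Ω ι : Type*}
    [MeasurableSpace Ω] {μ : Measure Ω} [Fintype ι] {S T : ι → Ω → ℝ}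
    (hint : ∀ k l, Integrable (fun ω => S k ω * T l ω) μ)
    (hcross : ∀ k l, k ≠ l → ∫ ω, S k ω * T l ω ∂μ = 0) (g : ι → ℝ) :
    ∫ ω, (∑ k, g k * S k ω) * (∑ l, g l * T l ω) ∂μ = ∑ l, g l ^ 2 * ∫ ω, S l ω * T l ω ∂μ := by
  have hexpand : ∀ ω, (∑ k, g k * S k ω) * (∑ l, g l * T l ω)
      = ∑ k, ∑ l, g k * g l * (S k ω * T l ω) := fun ω => by
    rw [sum_mul_sum]
    exact sum_congr rfl fun k _ => sum_congr rfl fun l _ => by ring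
  have hrow : ∀ k, ∑ l, g k * g l * ∫ ω, S k ω * T l ω ∂μ
      = g k ^ 2 * ∫ ω, S k ω * T k ω ∂μ := fun k => by
    rw [sum_eq_single k (fun l _ hl => by rw [hcross k l (Ne.symm hl), mul_zero])
      (fun h => absurd (mem_univ k) h)]
    ring
  simp_rw [hexpand]
  rw [integral_finsetSum _ fun k _ => integrable_finsetSum _ fun l _ => (hint k l).const_mul _]
  simp_rw [integral_finsetSum _ fun l _ => (hint _ l).const_mul _, integral_const_mul, hrow]

theorem stmt_14_general (Ω : Type*) [MeasureSpace Ω]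
    (L : ℕ) (hL : 1 ≤ L)
    (S S' : Fin L → Ω → ℝ)
    (hSS_int : ∀ k l, Integrable fun ω => S k ω * S l ω)
    (hSS'_int : ∀ k l, Integrable fun ω => S k ω * S' l ω)
    (ρ0 ρΔ : Fin L → ℝ)
    (huncorr : ∀ k l, k ≠ l → ∫ ω, S k ω * S l ω = 0)
    (huncorr' : ∀ k l, k ≠ l → ∫ ω, S k ω * S' l ω = 0)
    (hvar : ∀ l, ∫ ω, S l ω * S l ω = ρ0 l)
    (hvar_pos : ∀ l, 0 < ρ0 l)
    (hlag : ∀ l, ∫ ω, S l ω * S' l ω = ρΔ l)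
    (g : Fin L → ℝ) (hg : g ≠ 0)
    (X X' : Ω → ℝ)
    (hX : ∀ ω, X ω = ∑ l, g l * S l ω)
    (hX' : ∀ ω, X' ω = ∑ l, g l * S' l ω) :
    (∫ ω, X ω * X' ω) / (∫ ω, (X ω) ^ 2) ≤
      Finset.univ.sup' ⟨(⟨0, hL⟩ : Fin L), Finset.mem_univ _⟩
        (fun l => ρΔ l / ρ0 l) := by
  have hcov : ∫ ω, X ω * X' ω = ∑ l, g l ^ 2 * ρΔ l := by
    simp only [hX, hX', integral_sum_mul_sum_of_integral_mul_eq_zero hSS'_int huncorr', hlag]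
  have hvar_X : ∫ ω, X ω ^ 2 = ∑ l, g l ^ 2 * ρ0 l := by
    simp only [hX, sq, integral_sum_mul_sum_of_integral_mul_eq_zero hSS_int huncorr, hvar]
  rw [hcov, hvar_X]
  exact univ.sum_mul_div_sum_mul_le_sup'_div _ (fun l _ => sq_nonneg (g l))
    (fun l _ => hvar_pos l) (sum_sq_mul_pos_of_ne_zero hg hvar_pos)

/-- Founding principle of the CCA approach to BSS: the normalized autocorrelation of
any linear combination `X = ∑ g_l S_l` of spatially uncorrelated signals is at most
the maximum of the individual signals' normalized autocorrelations `ρ_l[Δ]/ρ_l[0]`. -/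
theorem stmt_14 (Ω : Type*) [MeasureSpace Ω] [IsProbabilityMeasure (volume : Measure Ω)]
    (L : ℕ) (hL : 1 ≤ L)
    (S S' : Fin L → Ω → ℝ)
    (hSS_int : ∀ k l, Integrable fun ω => S k ω * S l ω)
    (hSS'_int : ∀ k l, Integrable fun ω => S k ω * S' l ω)
    (ρ0 ρΔ : Fin L → ℝ)
    (huncorr : ∀ k l, k ≠ l → ∫ ω, S k ω * S l ω = 0)
    (huncorr' : ∀ k l, k ≠ l → ∫ ω, S k ω * S' l ω = 0)
    (hvar : ∀ l, ∫ ω, S l ω * S l ω = ρ0 l)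
    (hvar_pos : ∀ l, 0 < ρ0 l)
    (hlag : ∀ l, ∫ ω, S l ω * S' l ω = ρΔ l)
    (g : Fin L → ℝ) (hg : g ≠ 0)
    (X X' : Ω → ℝ)
    (hX : ∀ ω, X ω = ∑ l, g l * S l ω)
    (hX' : ∀ ω, X' ω = ∑ l, g l * S' l ω) :
    (∫ ω, X ω * X' ω) / (∫ ω, (X ω) ^ 2) ≤
      Finset.univ.sup' ⟨(⟨0, hL⟩ : Fin L), Finset.mem_univ _⟩
        (fun l => ρΔ l / ρ0 l) :=
  stmt_14_general Ω L hL S S' hSS_int hSS'_int ρ0 ρΔ huncorr huncorr' hvar hvar_pos hlag g hg X X'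
    hX hX'
end
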